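/- Axiom schemes A4–A6 are equivalent to their variable forms: in any filter I of F(L), for every variable x and formulas A, B: (∀x)(A⇒B) ⇒ ((∀x)A ⇒ (∀x)B) ∈ I; (∀x)A ⇒ A[t/x] ∈ I for every term t; and A ⇒ (∀x)A ∈ I whenever A is independent of x. -/
import Mathlib


/-- A first-order language: function and predicate symbols of each arity,
    with a distinguished 0-ary predicate symbol `ff` (falsum). -/
structure Lang where
  Func : ℕ → Type
  Pred : ℕ → Type
  ff : Pred 0

/-- Terms of `L` over a set `C` of parameters (variables are 0-indexed:
    `var i` is the variable `x_{i+1}` of the paper). -/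
inductive Tm (L : Lang) (C : Type) : Type where
  | var : ℕ → Tm L C
  | param : C → Tm L C
  | func : {n : ℕ} → L.Func n → (Fin n → Tm L C) → Tm L C

variable {L : Lang} {C : Type}

/-- Substitution `t[t₁, t₂, ...]` on terms. -/
def Tm.subst : Tm L C → (ℕ → Tm L C) → Tm L C
  | .var i, s => s i
  | .param c, _ => .param c
  | .func f ts, s => .func f (fun k => (ts k).subst s)

/-- `t⁺ = t[x₂, x₃, ...]`. -/
def Tm.shift (t : Tm L C) : Tm L C := t.subst fun i => .var (i + 1)

/-- The sequence `x₁, t₁⁺, t₂⁺, ...` used in the clause for `∀` in formula substitution. -/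
def liftSeq (s : ℕ → Tm L C) : ℕ → Tm L C
  | 0 => .var 0
  | n + 1 => (s n).shift

/-- Formulas of `L` over `C`: atomic formulas, implication and `∀`. -/
inductive Fml (L : Lang) (C : Type) : Type where
  | pred : {n : ℕ} → L.Pred n → (Fin n → Tm L C) → Fml L C
  | imp : Fml L C → Fml L C → Fml L C
  | all : Fml L C → Fml L C

/-- Substitution `A[t₁, t₂, ...]` on formulas:
    `(∀A)[t₁,t₂,...] = ∀(A[x₁, t₁⁺, t₂⁺, ...])`. -/
def Fml.subst : Fml L C → (ℕ → Tm L C) → Fml L C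
  | .pred P ts, s => .pred P (fun k => (ts k).subst s)
  | .imp A B, s => .imp (A.subst s) (B.subst s)
  | .all A, s => .all (A.subst (liftSeq s))

/-- The sequence `x₂, x₃, ...` (so `D⁺ = D.subst (plusSeq L C)`). -/
def plusSeq (L : Lang) (C : Type) : ℕ → Tm L C := fun i => .var (i + 1)

/-- The sequence `x₁, x₁, x₂, ...` (so `D⁻ = D.subst (minusSeq L C)`). -/
def minusSeq (L : Lang) (C : Type) : ℕ → Tm L C
  | 0 => .var 0
  | n + 1 => .var n

/-- The sequence substituting `t` for the variable `var i` and fixing all other variables,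
    i.e. `D[t/x_{i+1}]` in the paper's (1-indexed) notation. -/
def singleSeq (i : ℕ) (t : Tm L C) : ℕ → Tm L C := fun j => if j = i then t else .var j

/-- A term is independent of the variable `var i` if `t = t[x_{i+2}/x_{i+1}]`. -/
def Tm.Indep (i : ℕ) (t : Tm L C) : Prop := t.subst (singleSeq i (.var (i + 1))) = t

/-- A formula is independent of the variable `var i` if `A = A[x_{i+2}/x_{i+1}]`. -/
def Fml.Indep (i : ℕ) (A : Fml L C) : Prop := A.subst (singleSeq i (.var (i + 1))) = A

/-- The variable `var i` is free in `A` iff `A` is not independent of it. -/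
def Fml.FreeIn (i : ℕ) (A : Fml L C) : Prop := ¬ A.Indep i

/-- `(∀x_{i+1})A := ∀(A[x₂, x₃, ..., x_i, x₁, x_{i+2}, ...])` (0-indexed `i`):
    the substituted sequence sends `var i` to `var 0` and `var j` to `var (j+1)` otherwise. -/
def allQ (i : ℕ) (A : Fml L C) : Fml L C :=
  .all (A.subst fun j => if j = i then .var 0 else .var (j + 1))

/-- The sequence `t, x₁, x₂, ...`. -/
def instSeq (t : Tm L C) : ℕ → Tm L C
  | 0 => t
  | n + 1 => .var n

/-- The atomic formula `FF` (falsum). -/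
def FF (L : Lang) (C : Type) : Fml L C := .pred L.ff (fun i => i.elim0)

/-- `¬A := A ⇒ FF`. -/
def Fml.neg (A : Fml L C) : Fml L C := A.imp (FF L C)

/-- A perfect (Henkin) valuation of `L` over `C`. -/
def PerfectVal (U : Set (Fml L C)) : Prop :=
  FF L C ∉ U ∧
  (∀ A B : Fml L C, A.imp B ∈ U ↔ (A ∉ U ∨ B ∈ U)) ∧
  (∀ A : Fml L C, A.all ∈ U ↔ ∀ t : Tm L C, A.subst (instSeq t) ∈ U)

/-- The first-order axioms A1–A6 (language without equality), closed under prefixing `∀`. -/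
inductive Ax : Fml L C → Prop where
  | a1 (A B : Fml L C) : Ax (A.imp (B.imp A))
  | a2 (A B D : Fml L C) : Ax ((A.imp (B.imp D)).imp ((A.imp B).imp (A.imp D)))
  | a3 (A : Fml L C) : Ax ((A.neg.neg).imp A)
  | a4 (A B : Fml L C) : Ax (((A.imp B).all).imp ((Fml.all A).imp (Fml.all B)))
  | a5 (A : Fml L C) (t : Tm L C) : Ax ((Fml.all A).imp (A.subst (instSeq t)))
  | a6 (A : Fml L C) : Ax (A.imp (Fml.all (A.subst (plusSeq L C))))
  | gen (A : Fml L C) : Ax A → Ax A.all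

/-- A first-order filter of `F(L) = F(L, ∅)`: contains all axioms, closed under modus ponens. -/
def IsFilter (I : Set (Fml L Empty)) : Prop :=
  (∀ A : Fml L Empty, Ax A → A ∈ I) ∧
  ∀ A B : Fml L Empty, A ∈ I → A.imp B ∈ I → B ∈ I

/-- The inclusion `T(L) = T(L, ∅) ⊆ T(L, C)`. -/
def Tm.ofE : Tm L Empty → Tm L C
  | .var i => .var i
  | .param c => c.elim
  | .func f ts => .func f fun k => (ts k).ofE

/-- The inclusion `F(L) = F(L, ∅) ⊆ F(L, C)`. -/
def Fml.ofE : Fml L Empty → Fml L C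
  | .pred P ts => .pred P fun k => (ts k).ofE
  | .imp A B => .imp A.ofE B.ofE
  | .all A => .all A.ofE

/-- A logical valuation of `L`: the trace on `F(L)` of `U_{(t₁,t₂,...)}` for a perfect
    valuation `U` over some set of parameters. -/
def LogicalValuation (V : Set (Fml L Empty)) : Prop :=
  ∃ (C' : Type) (U : Set (Fml L C')) (t : ℕ → Tm L C'),
    PerfectVal U ∧ V = {A : Fml L Empty | (A.ofE : Fml L C').subst t ∈ U}

/-- A subset of `F(L)` is logically closed if it is an intersection of logical valuations. -/
def LogicallyClosed (S : Set (Fml L Empty)) : Prop :=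
  ∃ 𝒱 : Set (Set (Fml L Empty)), (∀ V ∈ 𝒱, LogicalValuation V) ∧ S = ⋂₀ 𝒱

/-- A formula has rank `n` iff it is independent of every variable beyond the first `n`,
    i.e. `A = A[x₁, ..., x_{n-1}, x_n, x_n, ...]`. A sentence is a formula of rank 0. -/
def Fml.hasRank (n : ℕ) (A : Fml L C) : Prop := ∀ i, n ≤ i → A.Indep i

/-- `∀⁰A = A`, `∀ⁿA = ∀(∀ⁿ⁻¹A)`. -/
def forallIter : ℕ → Fml L C → Fml L C
  | 0, A => A
  | n + 1, A => (forallIter n A).all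

lemma Tm.subst_subst (t : Tm L C) (s s' : ℕ → Tm L C) :
    (t.subst s).subst s' = t.subst (fun j => (s j).subst s') := by
  induction t with
  | var i => rfl
  | param c => rfl
  | func f ts ih =>
      simp only [Tm.subst]
      congr 1
      funext k
      exact ih k

lemma liftSeq_comp (s s' : ℕ → Tm L C) :
    (fun j => (liftSeq s j).subst (liftSeq s')) = liftSeq (fun j => (s j).subst s') := by
  funext j
  cases j with
  | zero => rfl
  | succ n =>
      show (s n).shift.subst (liftSeq s') = ((s n).subst s').shift
      unfold Tm.shift
      rw [Tm.subst_subst, Tm.subst_subst]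
      congr 1

lemma Fml.subst_subst (A : Fml L C) (s s' : ℕ → Tm L C) :
    (A.subst s).subst s' = A.subst (fun j => (s j).subst s') := by
  induction A generalizing s s' with
  | pred P ts =>
      simp only [Fml.subst]
      congr 1
      funext k
      exact Tm.subst_subst _ _ _
  | imp A B ihA ihB =>
      simp only [Fml.subst, ihA, ihB]
  | all A ih =>
      simp only [Fml.subst, ih, liftSeq_comp]

/-- the variable forms A4′–A6′ of the axiom schemes hold in every filter. -/
theorem axiom_variable_forms {L : Lang} (I : Set (Fml L Empty)) (hI : IsFilter I)
    (i : ℕ) (A B : Fml L Empty) :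
    (allQ i (A.imp B)).imp ((allQ i A).imp (allQ i B)) ∈ I ∧
    (∀ t : Tm L Empty, (allQ i A).imp (A.subst (singleSeq i t)) ∈ I) ∧
    (A.Indep i → A.imp (allQ i A) ∈ I) := by 
  obtain ⟨hax, hmp⟩ := hI
  refine ⟨?_, ?_, ?_⟩
  · exact hax _ (Ax.a4 _ _)
  · intro t
    have h := hax _ (Ax.a5 (A.subst fun j => if j = i then .var 0 else .var (j + 1)) t)
    have heq : ((A.subst fun j => if j = i then Tm.var 0 else Tm.var (j + 1)).subst
        (instSeq t)) = A.subst (singleSeq i t) := by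
      rw [Fml.subst_subst]
      congr 1
      funext j
      by_cases hj : j = i <;> simp [hj, Tm.subst, instSeq, singleSeq]
    rw [heq] at h
    exact h
  · intro hind
    have h := hax _ (Ax.a6 (C := Empty) A)
    have heq : A.subst (plusSeq L Empty) =
        A.subst fun j => if j = i then Tm.var 0 else Tm.var (j + 1) := by
      conv_lhs => rw [← hind]
      conv_rhs => rw [← hind]
      rw [Fml.subst_subst, Fml.subst_subst]
      congr 1
      funext j
      by_cases hj : j = i <;>
        simp [hj, singleSeq, Tm.subst, plusSeq, Nat.succ_ne_self]
    rw [heq] at h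
    exact h
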